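/- arXiv:2004.09503 — 5 statements merged into one kernel-verified Lean document; each statement's English description precedes it below -/
import Mathlib

section
/- Let F(X,Y,Z) = G ∧ F' and F* = G* ∧ F' be propositional formulas over disjoint variable sets X, Y, Z, and let Tbl(X,Z) = ∃Y.F and Tbl*(X,Z) = ∃Y.F*. Suppose Q(X,Z) is a solution to the partial quantifier elimination problem of taking G* out of ∃Y.(G* ∧ F'), i.e., ∃Y.(G* ∧ F') ≡ Q ∧ ∃Y.F'. Suppose further that for every assignment x to X there exists z with Tbl(x,z)=1, and for every x there exists z with Tbl*(x,z)=1. Then F does not imply Q if and only if Tbl does not imply Tbl*. -/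
/-!
Fix `x, z`. Since `∃ y, G ∧ F'` already entails `∃ y, F'`, the PQE equation turns the
implication `(∃ y, G ∧ F') → (∃ y, G* ∧ F')`, i.e. `Tbl x z → Tbl* x z`, into
`(∃ y, G ∧ F') → Q x z`, i.e. `∀ y, F x y z → Q x z`. Quantifying over `x, z` gives
`(F ⇒ Q) ↔ (Tbl ⇒ Tbl*)`, and the theorem is its negation.
-/

theorem exists_and_imp_exists_and_iff_of_pqe {Y : Type*} {G Gstar F' : Y → Prop} {q : Prop}
    (hPQE : (∃ y, Gstar y ∧ F' y) ↔ q ∧ ∃ y, F' y) :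
    ((∃ y, G y ∧ F' y) → ∃ y, Gstar y ∧ F' y) ↔ ∀ y, G y ∧ F' y → q := by
  rw [hPQE]
  constructor
  · exact fun h y hy => (h ⟨y, hy⟩).1
  · rintro h ⟨y, hG, hF'⟩
    exact ⟨h y ⟨hG, hF'⟩, y, hF'⟩

theorem false_property_characterization_general
    {σX σY σZ : Type}
    (G F' Gstar : σX → σY → σZ → Prop)
    (Q : σX → σZ → Prop)
    (F : σX → σY → σZ → Prop)
    (hF : ∀ x y z, F x y z ↔ G x y z ∧ F' x y z)
    (Fstar : σX → σY → σZ → Prop)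
    (hFstar : ∀ x y z, Fstar x y z ↔ Gstar x y z ∧ F' x y z)
    (Tbl Tblstar : σX → σZ → Prop)
    (hTbl : ∀ x z, Tbl x z ↔ ∃ y, F x y z)
    (hTblstar : ∀ x z, Tblstar x z ↔ ∃ y, Fstar x y z)
    (hPQE : ∀ x z, (∃ y, Gstar x y z ∧ F' x y z) ↔ (Q x z ∧ ∃ y, F' x y z)) :
    (¬ ∀ x y z, F x y z → Q x z) ↔ (¬ ∀ x z, Tbl x z → Tblstar x z) := by
  refine not_congr (forall_congr' fun x => ?_)
  rw [forall_comm]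
  refine forall_congr' fun z => ?_
  simp only [hTbl, hTblstar, hF, hFstar]
  exact (exists_and_imp_exists_and_iff_of_pqe (hPQE x z)).symm

/-- Proposition 1: `F ⊬ Q` iff `Tbl ⊬ Tbl*`, for a PQE solution `Q`. -/
theorem false_property_characterization
    {σX σY σZ : Type}
    (G F' Gstar : σX → σY → σZ → Prop)
    (Q : σX → σZ → Prop)
    (F : σX → σY → σZ → Prop)
    (hF : ∀ x y z, F x y z ↔ G x y z ∧ F' x y z)
    (Fstar : σX → σY → σZ → Prop)
    (hFstar : ∀ x y z, Fstar x y z ↔ Gstar x y z ∧ F' x y z)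
    (Tbl Tblstar : σX → σZ → Prop)
    (hTbl : ∀ x z, Tbl x z ↔ ∃ y, F x y z)
    (hTblstar : ∀ x z, Tblstar x z ↔ ∃ y, Fstar x y z)
    (hPQE : ∀ x z, (∃ y, Gstar x y z ∧ F' x y z) ↔ (Q x z ∧ ∃ y, F' x y z))
    (hTotal : ∀ x, ∃ z, Tbl x z)
    (hTotalStar : ∀ x, ∃ z, Tblstar x z) :
    (¬ ∀ x y z, F x y z → Q x z) ↔ (¬ ∀ x z, Tbl x z → Tblstar x z) :=
  false_property_characterization_general G F' Gstar Q F hF Fstar hFstar Tbl Tblstar hTbl hTblstar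
    hPQE
end

section
/- Under the hypotheses of the previous setting (F = G ∧ F', F* = G* ∧ F', Tbl = ∃Y.F, Tbl* = ∃Y.F*, and Q a PQE solution with ∃Y.(G* ∧ F') ≡ Q ∧ ∃Y.F'), if additionally for every assignment x to X there is exactly one z with Tbl*(x,z)=1, and for every x there is at least one z with Tbl(x,z)=1, then F does not imply Q if and only if Tbl is not logically equivalent to Tbl*. -/
/-! Since `Tbl* = Q ∧ ∃Y.F'` and `F` implies `F'`, the formula `F` implies `Q` exactly when
`Tbl ⊆ Tbl*`. An inclusion of a total relation in the graph of a function is an equality. -/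

theorem iff_of_imp_of_total_of_existsUnique {α β : Type*} {r s : α → β → Prop}
    (hrs : ∀ x z, r x z → s x z) (hr : ∀ x, ∃ z, r x z) (hs : ∀ x, ∃! z, s x z) (x : α) (z : β) :
    r x z ↔ s x z := by
  refine ⟨hrs x z, fun hsz => ?_⟩
  obtain ⟨w, hrw⟩ := hr x
  rwa [(hs x).unique (hrs x w hrw) hsz] at hrw

section PQE

variable {σX σY σZ : Type*}

theorem tblstar_iff_pqe {F' Gstar Fstar : σX → σY → σZ → Prop} {Q Tblstar : σX → σZ → Prop}
    (hFstar : ∀ x y z, Fstar x y z ↔ Gstar x y z ∧ F' x y z)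
    (hTblstar : ∀ x z, Tblstar x z ↔ ∃ y, Fstar x y z)
    (hPQE : ∀ x z, (∃ y, Gstar x y z ∧ F' x y z) ↔ (Q x z ∧ ∃ y, F' x y z)) (x : σX) (z : σZ) :
    Tblstar x z ↔ Q x z ∧ ∃ y, F' x y z := by
  simp only [hTblstar, hFstar, hPQE]

theorem entails_iff_imp_tblstar {F F' : σX → σY → σZ → Prop} {Q Tbl Tblstar : σX → σZ → Prop}
    (hFF' : ∀ x y z, F x y z → F' x y z)
    (hTbl : ∀ x z, Tbl x z ↔ ∃ y, F x y z)
    (hTblstar : ∀ x z, Tblstar x z ↔ Q x z ∧ ∃ y, F' x y z) :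
    (∀ x y z, F x y z → Q x z) ↔ ∀ x z, Tbl x z → Tblstar x z := by
  constructor
  · intro hFQ x z hT
    obtain ⟨y, hFy⟩ := (hTbl x z).1 hT
    exact (hTblstar x z).2 ⟨hFQ x y z hFy, y, hFF' x y z hFy⟩
  · intro hle x y z hFy
    exact ((hTblstar x z).1 (hle x z ((hTbl x z).2 ⟨y, hFy⟩))).1

end PQE

/-- Proposition 2: under functionality of `Tbl*`, `F ⊬ Q` iff `Tbl ≢ Tbl*`. -/
theorem false_property_characterization_functional
    {σX σY σZ : Type}
    (G F' Gstar : σX → σY → σZ → Prop)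
    (Q : σX → σZ → Prop)
    (F : σX → σY → σZ → Prop)
    (hF : ∀ x y z, F x y z ↔ G x y z ∧ F' x y z)
    (Fstar : σX → σY → σZ → Prop)
    (hFstar : ∀ x y z, Fstar x y z ↔ Gstar x y z ∧ F' x y z)
    (Tbl Tblstar : σX → σZ → Prop)
    (hTbl : ∀ x z, Tbl x z ↔ ∃ y, F x y z)
    (hTblstar : ∀ x z, Tblstar x z ↔ ∃ y, Fstar x y z)
    (hPQE : ∀ x z, (∃ y, Gstar x y z ∧ F' x y z) ↔ (Q x z ∧ ∃ y, F' x y z))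
    (hUniqueStar : ∀ x, ∃! z, Tblstar x z)
    (hTotal : ∀ x, ∃ z, Tbl x z) :
    (¬ ∀ x y z, F x y z → Q x z) ↔ (¬ ∀ x z, Tbl x z ↔ Tblstar x z) := by
  refine not_congr ?_
  rw [entails_iff_imp_tblstar (fun x y z h => ((hF x y z).1 h).2) hTbl
    (tblstar_iff_pqe hFstar hTblstar hPQE)]
  exact ⟨fun hle => iff_of_imp_of_total_of_existsUnique hle hTotal hUniqueStar,
    fun heq x z => (heq x z).1⟩
end

section
/- In the setting where F = G ∧ F', F* = G* ∧ F', Tbl = ∃Y.F, Tbl* = ∃Y.F*, Q is a PQE solution (∃Y.(G* ∧ F') ≡ Q ∧ ∃Y.F'), and for every input x there exists z with Tbl(x,z)=1: if (x,z) is an assignment with Tbl(x,z)=1 and Tbl*(x,z)=0, then F does not imply Q; concretely, taking y to be any witness with F(x,y,z)=1, the assignment (x,y,z) satisfies F and falsifies Q. -/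
theorem not_of_pqe_of_not_exists {σX σY σZ : Type} {F' Gstar : σX → σY → σZ → Prop}
    {Q : σX → σZ → Prop}
    (hPQE : ∀ x z, (∃ y, Gstar x y z ∧ F' x y z) ↔ (Q x z ∧ ∃ y, F' x y z))
    {x : σX} {y : σY} {z : σZ} (hF' : F' x y z) (hOut : ¬ ∃ y, Gstar x y z ∧ F' x y z) :
    ¬ Q x z :=
  fun hQ => hOut ((hPQE x z).mpr ⟨hQ, y, hF'⟩)

theorem table_gap_breaks_property_general
    {σX σY σZ : Type}
    (G F' Gstar : σX → σY → σZ → Prop)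
    (Q : σX → σZ → Prop)
    (F : σX → σY → σZ → Prop)
    (hF : ∀ x y z, F x y z ↔ G x y z ∧ F' x y z)
    (Fstar : σX → σY → σZ → Prop)
    (hFstar : ∀ x y z, Fstar x y z ↔ Gstar x y z ∧ F' x y z)
    (Tbl Tblstar : σX → σZ → Prop)
    (hTbl : ∀ x z, Tbl x z ↔ ∃ y, F x y z)
    (hTblstar : ∀ x z, Tblstar x z ↔ ∃ y, Fstar x y z)
    (hPQE : ∀ x z, (∃ y, Gstar x y z ∧ F' x y z) ↔ (Q x z ∧ ∃ y, F' x y z))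
    (x : σX) (z : σZ)
    (hIn : Tbl x z) (hOut : ¬ Tblstar x z) :
    (∀ y, F x y z → F x y z ∧ ¬ Q x z) ∧ ¬ (∀ x' y' z', F x' y' z' → Q x' z') := by
  obtain ⟨y, hFy⟩ := (hTbl x z).mp hIn
  have hNoGstar : ¬ ∃ y, Gstar x y z ∧ F' x y z := by
    simpa only [hTblstar, hFstar] using hOut
  have hnQ : ¬ Q x z := not_of_pqe_of_not_exists hPQE ((hF x y z).mp hFy).2 hNoGstar
  exact ⟨fun _ hF => ⟨hF, hnQ⟩, fun hImp => hnQ (hImp x y z hFy)⟩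

/-- The 'if' direction with an explicit counterexample: a point in `Tbl \ Tbl*` breaks `F ⇒ Q`. -/
theorem table_gap_breaks_property
    {σX σY σZ : Type}
    (G F' Gstar : σX → σY → σZ → Prop)
    (Q : σX → σZ → Prop)
    (F : σX → σY → σZ → Prop)
    (hF : ∀ x y z, F x y z ↔ G x y z ∧ F' x y z)
    (Fstar : σX → σY → σZ → Prop)
    (hFstar : ∀ x y z, Fstar x y z ↔ Gstar x y z ∧ F' x y z)
    (Tbl Tblstar : σX → σZ → Prop)
    (hTbl : ∀ x z, Tbl x z ↔ ∃ y, F x y z)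
    (hTblstar : ∀ x z, Tblstar x z ↔ ∃ y, Fstar x y z)
    (hPQE : ∀ x z, (∃ y, Gstar x y z ∧ F' x y z) ↔ (Q x z ∧ ∃ y, F' x y z))
    (hTotal : ∀ x, ∃ z, Tbl x z)
    (x : σX) (z : σZ)
    (hIn : Tbl x z) (hOut : ¬ Tblstar x z) :
    (∀ y, F x y z → F x y z ∧ ¬ Q x z) ∧ ¬ (∀ x' y' z', F x' y' z' → Q x' z') :=
  table_gap_breaks_property_general G F' Gstar Q F hF Fstar hFstar Tbl Tblstar hTbl hTblstar hPQE x
    z hIn hOut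
end

section
/- Let N* be a circuit obtained from circuit N by a modification, with specifying formulas F(X,Y,Z) and F*(X,Y,Z) such that both ∃Y.F and ∃Y.F* are graphs of functions f, f* : assignments(X) → assignments(Z) (each input produces exactly one output). Let Q(X,Z) be a PQE solution: ∃Y.(G* ∧ F') ≡ Q ∧ ∃Y.F', where F = G ∧ F' and F* = G* ∧ F'. Then there exists an input x with f(x) ≠ f*(x) if and only if F does not imply Q. Consequently, an input x breaking Q (i.e., extracted from an assignment satisfying F ∧ ¬Q) makes N and N* produce different outputs. -/
/-!
Inside the care set `∃ y, F' x y z` the PQE solution `Q` coincides with `∃ y, F*`, the graph of `f*`.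
Every point `(x, f x)` of the graph of `f` lies in that care set, so `Q x (f x)` holds exactly when
`f x = f* x`; and `F` implies `Q` exactly when `Q` holds on the graph of `f`.
-/

section PQE

variable {σX σY σZ : Type*} {F' Gstar Fstar : σX → σY → σZ → Prop} {Q : σX → σZ → Prop}
  {fstar : σX → σZ}

theorem pqe_and_exists_iff_eq (hFstar : ∀ x y z, Fstar x y z ↔ Gstar x y z ∧ F' x y z)
    (hGraphStar : ∀ x z, (∃ y, Fstar x y z) ↔ z = fstar x)
    (hPQE : ∀ x z, (∃ y, Gstar x y z ∧ F' x y z) ↔ (Q x z ∧ ∃ y, F' x y z)) (x : σX) (z : σZ) :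
    (Q x z ∧ ∃ y, F' x y z) ↔ z = fstar x := by
  rw [← hPQE, ← hGraphStar]
  simp only [hFstar]

theorem pqe_iff_eq_of_exists (hFstar : ∀ x y z, Fstar x y z ↔ Gstar x y z ∧ F' x y z)
    (hGraphStar : ∀ x z, (∃ y, Fstar x y z) ↔ z = fstar x)
    (hPQE : ∀ x z, (∃ y, Gstar x y z ∧ F' x y z) ↔ (Q x z ∧ ∃ y, F' x y z)) {x : σX} {z : σZ}
    (hcare : ∃ y, F' x y z) : Q x z ↔ z = fstar x := by
  rw [← pqe_and_exists_iff_eq hFstar hGraphStar hPQE, and_iff_left hcare]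

end PQE

theorem forall_imp_iff_forall_apply {σX σY σZ : Type*} {F : σX → σY → σZ → Prop}
    {Q : σX → σZ → Prop} {f : σX → σZ} (hGraph : ∀ x z, (∃ y, F x y z) ↔ z = f x) :
    (∀ x y z, F x y z → Q x z) ↔ ∀ x, Q x (f x) := by
  refine forall_congr' fun x => ⟨fun h => ?_, fun h y z hxyz => ?_⟩
  · obtain ⟨y, hy⟩ := (hGraph x (f x)).2 rfl
    exact h y (f x) hy
  · rwa [(hGraph x z).1 ⟨y, hxyz⟩]

/-- Breaking `Q` corresponds exactly to distinguishing the two circuits' functions. -/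
theorem fault_detection_iff_breaking_property
    {σX σY σZ : Type}
    (G F' Gstar : σX → σY → σZ → Prop)
    (Q : σX → σZ → Prop)
    (F : σX → σY → σZ → Prop)
    (hF : ∀ x y z, F x y z ↔ G x y z ∧ F' x y z)
    (Fstar : σX → σY → σZ → Prop)
    (hFstar : ∀ x y z, Fstar x y z ↔ Gstar x y z ∧ F' x y z)
    (f fstar : σX → σZ)
    (hGraph : ∀ x z, (∃ y, F x y z) ↔ z = f x)
    (hGraphStar : ∀ x z, (∃ y, Fstar x y z) ↔ z = fstar x)
    (hPQE : ∀ x z, (∃ y, Gstar x y z ∧ F' x y z) ↔ (Q x z ∧ ∃ y, F' x y z)) :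
    ((∃ x, f x ≠ fstar x) ↔ ¬ ∀ x y z, F x y z → Q x z) ∧
    (∀ x y z, F x y z → ¬ Q x z → f x ≠ fstar x) := by
  have hQ : ∀ x, Q x (f x) ↔ f x = fstar x := fun x => by
    obtain ⟨y, hy⟩ := (hGraph x (f x)).2 rfl
    exact pqe_iff_eq_of_exists hFstar hGraphStar hPQE ⟨y, ((hF x y (f x)).1 hy).2⟩
  refine ⟨?_, fun x y z hxyz hnQ => ?_⟩
  · simp only [forall_imp_iff_forall_apply hGraph, hQ, not_forall]
  · obtain rfl := (hGraph x z).1 ⟨y, hxyz⟩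
    exact fun heq => hnQ ((hQ x).2 heq)
end

section
/- Let F = G ∧ F' and F* = G* ∧ F' over variables X ∪ Y ∪ Z, and let Q(X,Z) be a PQE solution: ∃Y.(G* ∧ F') ≡ Q ∧ ∃Y.F'. If F implies F* (i.e., every assignment satisfying F satisfies G*), then F implies Q; equivalently, if Q is a false property of F (F does not imply Q), then F does not imply G*. -/
/-- If `F` implies `G*` then `F` implies `Q`; equivalently, a false property
requires `G*` not implied by `F`. -/
theorem false_property_requires_unimplied_modification
    {σX σY σZ : Type}
    (G F' Gstar : σX → σY → σZ → Prop)
    (Q : σX → σZ → Prop)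
    (F : σX → σY → σZ → Prop)
    (hF : ∀ x y z, F x y z ↔ G x y z ∧ F' x y z)
    (hPQE : ∀ x z, (∃ y, Gstar x y z ∧ F' x y z) ↔ (Q x z ∧ ∃ y, F' x y z)) :
    ((∀ x y z, F x y z → Gstar x y z) → ∀ x y z, F x y z → Q x z) ∧
    ((¬ ∀ x y z, F x y z → Q x z) → ¬ ∀ x y z, F x y z → Gstar x y z) := by
  have implies_Q : (∀ x y z, F x y z → Gstar x y z) → ∀ x y z, F x y z → Q x z :=
    fun hGstar x y z hFxyz => ((hPQE x z).mp ⟨y, hGstar x y z hFxyz, ((hF x y z).mp hFxyz).2⟩).1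
  exact ⟨implies_Q, mt implies_Q⟩
end
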